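/- Let A_{k₁} be a real n × n^{k₁−1} matrix and A_{k₂} a real n × n^{k₂−1} matrix with k₁, k₂ ≥ 2, let f_{k₁}(x) = A_{k₁} x^{[k₁−1]}, f_{k₂}(x) = A_{k₂} x^{[k₂−1]}, and g(x) = C x with C a real m × n matrix. Then for every x ∈ ℝⁿ, L_{f_{k₂}} L_{f_{k₁}} g(x) = C A_{k₁} B_{k₂k₁} x^{[k₁+k₂−3]}, where B_{k₂k₁} = Σ_{i=1}^{k₁−1} I ⊗ ⋯ ⊗ A_{k₂} ⊗ ⋯ ⊗ I is the sum over i = 1, …, k₁−1 of Kronecker products of k₁−1 factors in which A_{k₂} occupies the i-th factor and all other factors are the n × n identity matrix I. -/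

import Mathlib

/-!
The derivative of `x ↦ x^{[N]}` in the direction `v` is, by the product rule,
`Σ_{i<N} x^{[i]} ⊗ v ⊗ x^{[N-1-i]}`. For `v = A x^{[k-1]}` the mixed-product rule
`(P ⊗ Q)(u ⊗ w) = P u ⊗ Q w` rewrites the `i`-th summand as
`(I^{⊗i} ⊗ A ⊗ I^{⊗(N-1-i)}) x^{[N+k-2]}`, so the derivative is `B x^{[N+k-2]}`.
Since `g` is linear, `L_{f_{k₁}} g (x) = C A_{k₁} x^{[k₁-1]}`, and applying this with
`N = k₁ - 1`, `A = A_{k₂}` gives the theorem.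
-/

open Matrix BigOperators

noncomputable section

/-- Kronecker product of (column) vectors. -/
def vkron {a b : ℕ} (u : Fin a → ℝ) (v : Fin b → ℝ) : Fin (a * b) → ℝ :=
  fun i => u (finProdFinEquiv.symm i).1 * v (finProdFinEquiv.symm i).2

/-- Cast a vector along an equality of dimensions. -/
def castV {a b : ℕ} (h : a = b) (v : Fin a → ℝ) : Fin b → ℝ :=
  fun i => v (Fin.cast h.symm i)

/-- `vpow x m = x ⊗ x ⊗ ⋯ ⊗ x` (`m` factors), the `m`-fold Kronecker power. -/
def vpow {n : ℕ} (x : Fin n → ℝ) : (m : ℕ) → Fin (n ^ m) → ℝ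
  | 0 => fun _ => 1
  | m + 1 => castV (pow_succ' n m).symm (vkron x (vpow x m))

/-- Kronecker product of matrices. -/
def mkron {a b c d : ℕ} (A : Matrix (Fin a) (Fin b) ℝ) (B : Matrix (Fin c) (Fin d) ℝ) :
    Matrix (Fin (a * c)) (Fin (b * d)) ℝ :=
  fun i j =>
    A (finProdFinEquiv.symm i).1 (finProdFinEquiv.symm j).1 *
      B (finProdFinEquiv.symm i).2 (finProdFinEquiv.symm j).2

/-- Cast a matrix along equalities of dimensions. -/
def castM {a b a' b' : ℕ} (ha : a = a') (hb : b = b')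
    (M : Matrix (Fin a) (Fin b) ℝ) : Matrix (Fin a') (Fin b') ℝ :=
  fun i j => M (Fin.cast ha.symm i) (Fin.cast hb.symm j)

/-- `Bmat k N hk A = Σ_{i=1}^{N} I^{⊗(i-1)} ⊗ A ⊗ I^{⊗(N-i)}`, where `A` is `n × n^(k-1)`
and `I` is the `n × n` identity; the result is an `n^N × n^(N+k-2)` matrix. -/
def Bmat {n : ℕ} (k N : ℕ) (hk : 2 ≤ k) (A : Matrix (Fin n) (Fin (n ^ (k - 1))) ℝ) :
    Matrix (Fin (n ^ N)) (Fin (n ^ (N + k - 2))) ℝ :=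
  ∑ i : Fin N,
    castM (by have := i.isLt; rw [← pow_succ', ← pow_add]; congr 1; omega)
      (by have := i.isLt; have := hk; rw [← pow_add, ← pow_add]; congr 1; omega)
      (mkron (1 : Matrix (Fin (n ^ (i : ℕ))) (Fin (n ^ (i : ℕ))) ℝ)
        (mkron A (1 : Matrix (Fin (n ^ (N - 1 - (i : ℕ)))) (Fin (n ^ (N - 1 - (i : ℕ)))) ℝ)))

/-- Lie derivative of an output map along a vector field. -/
def lieD {n m : ℕ} (f : (Fin n → ℝ) → Fin n → ℝ) (φ : (Fin n → ℝ) → Fin m → ℝ) :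
    (Fin n → ℝ) → Fin m → ℝ :=
  fun x => fderiv ℝ φ x (f x)

/-- Iterated Lie derivative `L_f^j φ`. -/
def lieIter {n m : ℕ} (f : (Fin n → ℝ) → Fin n → ℝ) (φ : (Fin n → ℝ) → Fin m → ℝ) :
    ℕ → (Fin n → ℝ) → Fin m → ℝ
  | 0 => φ
  | j + 1 => lieD f (lieIter f φ j)

section KroneckerCalculus

variable {n : ℕ}

section VectorKronecker

variable {a b c : ℕ}

@[simp] lemma castV_castV (h : a = b) (h' : b = c) (u : Fin a → ℝ) :
    castV h' (castV h u) = castV (h.trans h') u := rfl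

@[simp] lemma castV_rfl (u : Fin a → ℝ) : castV rfl u = u := rfl

lemma vkron_castV_left {a' : ℕ} (h : a = a') (u : Fin a → ℝ) (w : Fin b → ℝ) :
    vkron (castV h u) w = castV (by rw [h]) (vkron u w) := by
  subst h; rfl

lemma vkron_castV_right {b' : ℕ} (h : b = b') (u : Fin a → ℝ) (w : Fin b → ℝ) :
    vkron u (castV h w) = castV (by rw [h]) (vkron u w) := by
  subst h; rfl

lemma vkron_assoc (u : Fin a → ℝ) (v : Fin b → ℝ) (w : Fin c → ℝ) :
    vkron u (vkron v w) = castV (mul_assoc a b c) (vkron (vkron u v) w) := by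
  funext i
  simp only [vkron, castV, finProdFinEquiv_symm_apply, Fin.divNat, Fin.modNat, Fin.val_cast]
  have hu : (i : ℕ) / (b * c) = i / c / b := by rw [Nat.div_div_eq_div_mul, Nat.mul_comm c b]
  have hv : (i : ℕ) % (b * c) / c = i / c % b := by
    rw [← Nat.mod_mul_right_div_self, Nat.mul_comm c b]
  have hw : (i : ℕ) % (b * c) % c = i % c := Nat.mod_mod_of_dvd _ (dvd_mul_left c b)
  simp only [← mul_assoc, hu, hv, hw]

lemma vkron_one_left (w : Fin b → ℝ) :
    vkron (fun _ : Fin 1 => (1 : ℝ)) w = castV (one_mul b).symm w := by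
  funext i
  simp only [vkron, castV, finProdFinEquiv_symm_apply, Fin.modNat, one_mul]
  exact congrArg w (Fin.ext (Nat.mod_eq_of_lt (by simpa using i.isLt)))

lemma vkron_sum_right {ι : Type*} (u : Fin a → ℝ) (s : Finset ι) (f : ι → Fin b → ℝ) :
    vkron u (∑ i ∈ s, f i) = ∑ i ∈ s, vkron u (f i) := by
  funext j
  simp [vkron, Finset.sum_apply, Finset.mul_sum]

lemma castV_add (h : a = b) (u v : Fin a → ℝ) : castV h (u + v) = castV h u + castV h v := rfl

lemma castV_sum {ι : Type*} (h : a = b) (s : Finset ι) (f : ι → Fin a → ℝ) :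
    castV h (∑ i ∈ s, f i) = ∑ i ∈ s, castV h (f i) := by
  funext j
  simp [castV, Finset.sum_apply]

end VectorKronecker

section KroneckerPower

variable (x : Fin n → ℝ)

lemma vpow_succ (m : ℕ) : vpow x (m + 1) = castV (pow_succ' n m).symm (vkron x (vpow x m)) :=
  rfl

lemma vkron_vpow (m : ℕ) : vkron x (vpow x m) = castV (pow_succ' n m) (vpow x (m + 1)) :=
  rfl

lemma vpow_congr {a b : ℕ} (h : a = b) : vpow x b = castV (by rw [h]) (vpow x a) := by
  subst h; rfl

lemma vpow_add (a b : ℕ) :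
    vpow x (a + b) = castV (pow_add n a b).symm (vkron (vpow x a) (vpow x b)) := by
  induction a with
  | zero =>
    change _ = castV _ (vkron (fun _ : Fin 1 => (1 : ℝ)) (vpow x b))
    rw [vkron_one_left, vpow_congr x (zero_add b).symm]
    rfl
  | succ a ih =>
    rw [vpow_congr x (show a + b + 1 = a + 1 + b by omega), vpow_succ, ih, vpow_succ,
      vkron_castV_right, vkron_castV_left, vkron_assoc]
    rfl

lemma vpow_add_add {a b c N : ℕ} (h : a + (b + c) = N) :
    vpow x N = castV (by rw [← h, pow_add, pow_add])
      (vkron (vpow x a) (vkron (vpow x b) (vpow x c))) := by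
  rw [vpow_congr x h, vpow_add, vpow_add, vkron_castV_right, castV_castV, castV_castV]

end KroneckerPower

section MatrixKronecker

variable {a b c d : ℕ}

lemma castM_mulVec_castV {a' b' : ℕ} (ha : a = a') (hb : b = b')
    (M : Matrix (Fin a) (Fin b) ℝ) (v : Fin b → ℝ) :
    castM ha hb M *ᵥ castV hb v = castV ha (M *ᵥ v) := by
  subst ha hb; rfl

lemma mkron_mulVec_vkron (A : Matrix (Fin a) (Fin b) ℝ) (B : Matrix (Fin c) (Fin d) ℝ)
    (u : Fin b → ℝ) (v : Fin d → ℝ) :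
    mkron A B *ᵥ vkron u v = vkron (A *ᵥ u) (B *ᵥ v) := by
  funext i
  simp only [mulVec, dotProduct, vkron, mkron]
  rw [← finProdFinEquiv.sum_comp, Fintype.sum_prod_type, Finset.sum_mul_sum]
  simp only [Equiv.symm_apply_apply]
  exact Finset.sum_congr rfl fun p _ => Finset.sum_congr rfl fun q _ => by ring

end MatrixKronecker

section Derivative

def vkronCLM {a b : ℕ} : (Fin a → ℝ) →L[ℝ] (Fin b → ℝ) →L[ℝ] (Fin (a * b) → ℝ) :=
  (LinearMap.mk₂ ℝ vkron
    (fun u u' w => by funext i; simp [vkron, add_mul])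
    (fun r u w => by funext i; simp [vkron, mul_assoc])
    (fun u w w' => by funext i; simp [vkron, mul_add])
    (fun r u w => by funext i; simp [vkron, mul_left_comm])).toContinuousBilinearMap

@[simp] lemma vkronCLM_apply {a b : ℕ} (u : Fin a → ℝ) (v : Fin b → ℝ) :
    vkronCLM u v = vkron u v := rfl

def castVCLM {a b : ℕ} (h : a = b) : (Fin a → ℝ) →L[ℝ] (Fin b → ℝ) :=
  (LinearMap.funLeft ℝ ℝ (Fin.cast h.symm)).toContinuousLinearMap

@[simp] lemma castVCLM_apply {a b : ℕ} (h : a = b) (v : Fin a → ℝ) :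
    castVCLM h v = castV h v := rfl

lemma pow_mul_mul_pow_sub {N : ℕ} (i : Fin N) : n ^ (i : ℕ) * (n * n ^ (N - 1 - i)) = n ^ N := by
  rw [← pow_succ', ← pow_add]
  congr 1
  omega

def vpowDeriv (x : Fin n → ℝ) (N : ℕ) : (Fin n → ℝ) →L[ℝ] (Fin (n ^ N) → ℝ) :=
  ∑ i : Fin N, castVCLM (pow_mul_mul_pow_sub i) ∘L
    vkronCLM (vpow x i) ∘L vkronCLM.flip (vpow x (N - 1 - i))

variable (x : Fin n → ℝ)

lemma vpowDeriv_apply (N : ℕ) (v : Fin n → ℝ) :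
    vpowDeriv x N v = ∑ i : Fin N,
      castV (pow_mul_mul_pow_sub i) (vkron (vpow x i) (vkron v (vpow x (N - 1 - i)))) := by
  simp [vpowDeriv]

lemma vpowDeriv_succ_apply (N : ℕ) (v : Fin n → ℝ) :
    vpowDeriv x (N + 1) v =
      castV (pow_succ' n N).symm (vkron v (vpow x N) + vkron x (vpowDeriv x N v)) := by
  rw [vpowDeriv_apply, vpowDeriv_apply, Fin.sum_univ_succ, vkron_sum_right, castV_add, castV_sum]
  congr 1
  · change castV _ (vkron (fun _ : Fin 1 => (1 : ℝ)) (vkron v (vpow x (N + 1 - 1 - 0)))) = _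
    rw [vkron_one_left]
    rfl
  · refine Finset.sum_congr rfl fun i _ => ?_
    change castV _ (vkron (vpow x (i + 1)) (vkron v (vpow x (N + 1 - 1 - (i + 1))))) = _
    rw [vpow_congr x (show N - 1 - i = N + 1 - 1 - (i + 1) by omega), vkron_castV_right,
      vkron_castV_right, vkron_castV_right]
    conv_rhs => rw [vkron_assoc, vkron_vpow, vkron_castV_left]
    rfl

lemma hasFDerivAt_vpow (N : ℕ) : HasFDerivAt (fun y => vpow y N) (vpowDeriv x N) x := by
  induction N with
  | zero =>
    rw [show vpowDeriv x 0 = 0 from Fin.sum_univ_zero _]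
    exact hasFDerivAt_const _ x
  | succ N ih =>
    have hprod := (vkronCLM (a := n) (b := n ^ N)).hasFDerivAt.clm_apply ih
    refine ((castVCLM (pow_succ' n N).symm).hasFDerivAt.comp x hprod).congr_fderiv ?_
    ext1 v
    simp only [ContinuousLinearMap.comp_apply, _root_.add_apply, castVCLM_apply,
      vkronCLM_apply, ContinuousLinearMap.flip_apply, vpowDeriv_succ_apply]
    exact add_comm _ _

end Derivative

lemma Bmat_mulVec_vpow (x : Fin n → ℝ) {k : ℕ} (N : ℕ) (hk : 2 ≤ k)
    (A : Matrix (Fin n) (Fin (n ^ (k - 1))) ℝ) :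
    Bmat k N hk A *ᵥ vpow x (N + k - 2) = vpowDeriv x N (A *ᵥ vpow x (k - 1)) := by
  rw [vpowDeriv_apply, Bmat, sum_mulVec]
  refine Finset.sum_congr rfl fun i _ => ?_
  rw [vpow_add_add x (show i + ((k - 1) + (N - 1 - i)) = N + k - 2 by omega), castM_mulVec_castV,
    mkron_mulVec_vkron, mkron_mulVec_vkron, one_mulVec, one_mulVec]

section LieDerivative

variable {m : ℕ} (f : (Fin n → ℝ) → Fin n → ℝ)

lemma lieD_mulVec (C : Matrix (Fin m) (Fin n) ℝ) :
    lieD f (fun y => C *ᵥ y) = fun y => C *ᵥ f y := by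
  funext y
  exact congrFun (congrArg DFunLike.coe (C.mulVecLin.toContinuousLinearMap.fderiv)) (f y)

lemma lieD_mulVec_vpow {N : ℕ} (M : Matrix (Fin m) (Fin (n ^ N)) ℝ) (x : Fin n → ℝ) :
    lieD f (fun y => M *ᵥ vpow y N) x = M *ᵥ vpowDeriv x N (f x) :=
  congrFun (congrArg DFunLike.coe
    ((M.mulVecLin.toContinuousLinearMap.hasFDerivAt.comp x (hasFDerivAt_vpow x N)).fderiv)) (f x)

end LieDerivative

end KroneckerCalculus

/-- For `f_{k₁}(x) = A_{k₁} x^{[k₁-1]}`, `f_{k₂}(x) = A_{k₂} x^{[k₂-1]}`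
(`k₁, k₂ ≥ 2`) and `g(x) = C x`,
`L_{f_{k₂}} L_{f_{k₁}} g(x) = C A_{k₁} B_{k₂k₁} x^{[k₁+k₂-3]}` with
`B_{k₂k₁} = Σ_{i=1}^{k₁-1} I ⊗ ⋯ ⊗ A_{k₂} ⊗ ⋯ ⊗ I` (`k₁-1` Kronecker factors, `A_{k₂}` in
the `i`-th factor). -/
theorem mixed_lie_derivative_two (n k₁ k₂ m : ℕ) (hk₁ : 2 ≤ k₁) (hk₂ : 2 ≤ k₂)
    (A₁ : Matrix (Fin n) (Fin (n ^ (k₁ - 1))) ℝ) (A₂ : Matrix (Fin n) (Fin (n ^ (k₂ - 1))) ℝ)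
    (C : Matrix (Fin m) (Fin n) ℝ) (x : Fin n → ℝ) :
    lieD (fun y => A₂.mulVec (vpow y (k₂ - 1)))
        (lieD (fun y => A₁.mulVec (vpow y (k₁ - 1))) (fun y => C.mulVec y)) x =
      (C * A₁ * castM rfl (by congr 1; omega) (Bmat k₂ (k₁ - 1) hk₂ A₂)).mulVec
        (vpow x (k₁ + k₂ - 3)) := by
  have inner : lieD (fun y => A₁ *ᵥ vpow y (k₁ - 1)) (fun y => C *ᵥ y) =
      fun y => (C * A₁) *ᵥ vpow y (k₁ - 1) := by
    simp only [lieD_mulVec, mulVec_mulVec]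
  rw [inner, lieD_mulVec_vpow, ← Bmat_mulVec_vpow x _ hk₂, ← mulVec_mulVec (N := castM _ _ _),
    vpow_congr x (show k₁ - 1 + k₂ - 2 = k₁ + k₂ - 3 by omega), castM_mulVec_castV, castV_rfl]

end
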